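/- Let T be θ-averaged with respect to ‖·‖_M, with infimal displacement vector v, and let x⋆ satisfy x⋆ - T x⋆ = v. Then the fixed-point iteration z^{k+1} = T̄ z^k with T̄ = I - αθS and z⁰ = x⋆ satisfies z^k = x⋆ - kαv for all k ≥ 0; in particular θ S z^k = v for all k. -/

import Mathlib

/-!
Write `R = θ S`. If `R y = v` and `x = y - c v` with `0 ≤ c` and `cθ < 1`, put `d = S x - S y`.
Cocoercivity along the direction `-v` gives `‖d‖² ≤ -2c⟪d, v⟫`, while minimality of `‖v‖` in
`‖v + θ d‖ = ‖R x‖` gives `-2⟪d, v⟫ ≤ θ‖d‖²`; together `‖d‖² ≤ cθ‖d‖²`, so `d = 0` and `R x = v`.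
Chaining such short steps, `R` equals `v` on the whole ray `x⋆ - ℝ≥0 v`, on which the iteration
moves by `-αv` per step.
-/

/-- The `M`-inner product induced by a positive definite self-adjoint operator `M`. -/
noncomputable def Minner {H : Type*} [NormedAddCommGroup H] [InnerProductSpace ℝ H]
    (M : H →L[ℝ] H) (x y : H) : ℝ := inner ℝ x (M y)

/-- The `M`-norm. -/
noncomputable def Mnorm {H : Type*} [NormedAddCommGroup H] [InnerProductSpace ℝ H]
    (M : H →L[ℝ] H) (x : H) : ℝ := Real.sqrt (Minner M x x)

section

variable {H : Type*} [NormedAddCommGroup H] [InnerProductSpace ℝ H] {M : H →L[ℝ] H}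

lemma Minner_comm (hMsym : ∀ x y : H, (inner ℝ (M x) y : ℝ) = inner ℝ x (M y)) (x y : H) :
    Minner M x y = Minner M y x := by
  rw [Minner, Minner, ← hMsym, real_inner_comm]

lemma Minner_smul_left (a : ℝ) (x y : H) : Minner M (a • x) y = a * Minner M x y := by
  simp only [Minner, inner_smul_left, RCLike.conj_to_real]

lemma Minner_smul_right (a : ℝ) (x y : H) : Minner M x (a • y) = a * Minner M x y := by
  simp only [Minner, map_smul, inner_smul_right]

lemma Minner_neg_right (x y : H) : Minner M x (-y) = -Minner M x y := by
  simp only [Minner, map_neg, inner_neg_right]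

lemma Minner_self_add (hMsym : ∀ x y : H, (inner ℝ (M x) y : ℝ) = inner ℝ x (M y)) (x y : H) :
    Minner M (x + y) (x + y) = Minner M x x + 2 * Minner M x y + Minner M y y := by
  have hyx : Minner M y x = Minner M x y := Minner_comm hMsym y x
  simp only [Minner, map_add, inner_add_left, inner_add_right] at hyx ⊢
  rw [hyx]
  ring

lemma Minner_self_nonneg (hMpos : ∀ x : H, x ≠ 0 → 0 < (inner ℝ x (M x) : ℝ)) (x : H) :
    0 ≤ Minner M x x := by
  rcases eq_or_ne x 0 with rfl | hx
  · simp [Minner]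
  · exact (hMpos x hx).le

lemma eq_zero_of_Minner_self_eq_zero (hMpos : ∀ x : H, x ≠ 0 → 0 < (inner ℝ x (M x) : ℝ))
    {x : H} (hx : Minner M x x = 0) : x = 0 := by
  by_contra hne
  exact (hMpos x hne).ne' hx

lemma Mnorm_sq (hMpos : ∀ x : H, x ≠ 0 → 0 < (inner ℝ x (M x) : ℝ)) (x : H) :
    Mnorm M x ^ 2 = Minner M x x :=
  Real.sq_sqrt (Minner_self_nonneg hMpos x)

lemma Mnorm_le_Mnorm_iff (hMpos : ∀ x : H, x ≠ 0 → 0 < (inner ℝ x (M x) : ℝ)) (x y : H) :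
    Mnorm M x ≤ Mnorm M y ↔ Minner M x x ≤ Minner M y y :=
  Real.sqrt_le_sqrt_iff (Minner_self_nonneg hMpos y)

lemma smul_apply_sub_smul_eq_of_mul_lt_one
    (hMsym : ∀ x y : H, (inner ℝ (M x) y : ℝ) = inner ℝ x (M y))
    (hMpos : ∀ x : H, x ≠ 0 → 0 < (inner ℝ x (M x) : ℝ))
    {θ : ℝ} (hθ : 0 < θ) {S : H → H}
    (hcoco : ∀ x y, Minner M (S x - S y) (x - y) ≥ (1 / 2) * (Mnorm M (S x - S y)) ^ 2)
    {v : H} (hvmin : ∀ w : H, Mnorm M v ≤ Mnorm M (θ • S w))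
    {y : H} (hy : θ • S y = v) {c : ℝ} (hc : 0 ≤ c) (hcθ : c * θ < 1) :
    θ • S (y - c • v) = v := by
  set x := y - c • v
  set d := S x - S y
  have hD := Minner_self_nonneg hMpos d
  have hmin : 0 ≤ θ * Minner M d d + 2 * Minner M d v := by
    have hRx : θ • S x = θ • d + v := by rw [← hy, ← smul_add, sub_add_cancel]
    have h := hvmin x
    rw [hRx, Mnorm_le_Mnorm_iff hMpos, Minner_self_add hMsym, Minner_smul_left,
      Minner_smul_left, Minner_smul_right] at h
    nlinarith
  have hco : Minner M d d ≤ -2 * c * Minner M d v := by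
    have h := hcoco x y
    rw [sub_sub_cancel_left, Minner_neg_right, Minner_smul_right, Mnorm_sq hMpos] at h
    linarith
  have hd : Minner M d d = 0 := by nlinarith [mul_nonneg hc hmin]
  rw [← hy, sub_eq_zero.mp (eq_zero_of_Minner_self_eq_zero hMpos hd)]

lemma smul_apply_sub_smul_eq
    (hMsym : ∀ x y : H, (inner ℝ (M x) y : ℝ) = inner ℝ x (M y))
    (hMpos : ∀ x : H, x ≠ 0 → 0 < (inner ℝ x (M x) : ℝ))
    {θ : ℝ} (hθ : 0 < θ) {S : H → H}
    (hcoco : ∀ x y, Minner M (S x - S y) (x - y) ≥ (1 / 2) * (Mnorm M (S x - S y)) ^ 2)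
    {v : H} (hvmin : ∀ w : H, Mnorm M v ≤ Mnorm M (θ • S w))
    {y : H} (hy : θ • S y = v) {c : ℝ} (hc : 0 ≤ c) :
    θ • S (y - c • v) = v := by
  obtain ⟨n, hn⟩ := exists_nat_gt (c * θ)
  have hn0 : (0 : ℝ) < n := lt_of_le_of_lt (by positivity) hn
  have hstep : c / n * θ < 1 := by rwa [div_mul_eq_mul_div, div_lt_one hn0]
  have hmul : ∀ m : ℕ, θ • S (y - (m * (c / n)) • v) = v := by
    intro m
    induction m with
    | zero => simpa using hy
    | succ m ih =>
      have hsplit : y - ((m + 1 : ℕ) * (c / n)) • v = y - (m * (c / n)) • v - (c / n) • v := by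
        push_cast
        module
      rw [hsplit]
      exact smul_apply_sub_smul_eq_of_mul_lt_one hMsym hMpos hθ hcoco hvmin ih (by positivity)
        hstep
  simpa [mul_div_cancel₀ c hn0.ne'] using hmul n

end

theorem stmt14_general {H : Type*} [NormedAddCommGroup H] [InnerProductSpace ℝ H]
    (M : H →L[ℝ] H)
    (hMsym : ∀ x y : H, (inner ℝ (M x) y : ℝ) = inner ℝ x (M y))
    (hMpos : ∀ x : H, x ≠ 0 → 0 < (inner ℝ x (M x) : ℝ))
    (θ α : ℝ) (hθ : θ ∈ Set.Ioc (0 : ℝ) 1) (hα : α ∈ Set.Ioc (0 : ℝ) 1)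
    (S : H → H)
    (hcoco : ∀ x y, Minner M (S x - S y) (x - y) ≥ (1 / 2) * (Mnorm M (S x - S y)) ^ 2)
    (v : H) (hvmin : ∀ w : H, Mnorm M v ≤ Mnorm M (θ • S w))
    (xstar : H) (hxstar : θ • S xstar = v)
    (z : ℕ → H) (hz0 : z 0 = xstar)
    (hzstep : ∀ k, z (k + 1) = z k - (α * θ) • S (z k)) :
    ∀ k : ℕ, z k = xstar - ((k : ℝ) * α) • v ∧ θ • S (z k) = v := by
  have hray : ∀ k : ℕ, θ • S (xstar - ((k : ℝ) * α) • v) = v := fun k =>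
    smul_apply_sub_smul_eq hMsym hMpos hθ.1 hcoco hvmin hxstar (mul_nonneg k.cast_nonneg hα.1.le)
  have hz : ∀ k : ℕ, z k = xstar - ((k : ℝ) * α) • v := by
    intro k
    induction k with
    | zero => simp [hz0]
    | succ k ih =>
      rw [hzstep, mul_smul, ih, hray]
      push_cast
      module
  exact fun k => ⟨hz k, hz k ▸ hray k⟩

/-- If `x⋆ - T x⋆ = v`, the iteration `z⁰ = x⋆`, `zᵏ⁺¹ = zᵏ - αθ S zᵏ` satisfies
`zᵏ = x⋆ - kα v`, and `θ S zᵏ = v` for all `k`. -/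
theorem stmt14 {H : Type*} [NormedAddCommGroup H] [InnerProductSpace ℝ H]
    (M : H →L[ℝ] H)
    (hMsym : ∀ x y : H, (inner ℝ (M x) y : ℝ) = inner ℝ x (M y))
    (hMpos : ∀ x : H, x ≠ 0 → 0 < (inner ℝ x (M x) : ℝ))
    (θ α : ℝ) (hθ : θ ∈ Set.Ioc (0 : ℝ) 1) (hα : α ∈ Set.Ioc (0 : ℝ) 1)
    (T S : H → H) (hS : ∀ x, S x = (1 / θ) • (x - T x))
    (hcoco : ∀ x y, Minner M (S x - S y) (x - y) ≥ (1 / 2) * (Mnorm M (S x - S y)) ^ 2)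
    (v : H) (hvmin : ∀ w : H, Mnorm M v ≤ Mnorm M (θ • S w))
    (xstar : H) (hxstar : θ • S xstar = v)
    (z : ℕ → H) (hz0 : z 0 = xstar)
    (hzstep : ∀ k, z (k + 1) = z k - (α * θ) • S (z k)) :
    ∀ k : ℕ, z k = xstar - ((k : ℝ) * α) • v ∧ θ • S (z k) = v :=
  stmt14_general M hMsym hMpos θ α hθ hα S hcoco v hvmin xstar hxstar z hz0 hzstep
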